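/- Let s ≥ 2 and k ≥ 0 be integers. Every finite locally s-colourable simple graph G with at least one vertex (and with χ(G)+k ≤ |V(G)|) satisfies f_G(χ(G) + k) ≤ (s−1)(k+1) + 1. -/

import Mathlib

open SimpleGraph

/-- `σ` is a proper colouring of `G` with colours in `ℕ`. -/
def IsProperColoring {V : Type*} (G : SimpleGraph V) (σ : V → ℕ) : Prop :=
  ∀ ⦃u v : V⦄, G.Adj u v → σ u ≠ σ v

/-- The chromatic number of `G`, as a natural number. -/
noncomputable def chromNum {V : Type*} (G : SimpleGraph V) : ℕ :=
  sInf {n : ℕ | G.Colorable n}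

/-- The discrepancy `φ_σ(G)` of a proper colouring `σ` of `G`: the maximum, over all
induced subgraphs `G[S]` of `G`, of `|σ(S)| - χ(G[S])`. -/
noncomputable def colDisc {V : Type*} (G : SimpleGraph V) (σ : V → ℕ) : ℤ :=
  sSup {z : ℤ | ∃ S : Set V, z = ((σ '' S).ncard : ℤ) - (chromNum (G.induce S) : ℤ)}

/-- The chromatic discrepancy `φ(G)`: the minimum of `φ_σ(G)` over all proper
colourings `σ` of `G`. -/
noncomputable def chromDisc {V : Type*} (G : SimpleGraph V) : ℤ :=
  sInf {z : ℤ | ∃ σ : V → ℕ, IsProperColoring G σ ∧ z = colDisc G σ}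

/-- `G` is locally `s`-colourable: the closed neighbourhood of every vertex induces an
`s`-colourable subgraph. -/
def LocallyColorable {V : Type*} (G : SimpleGraph V) (s : ℕ) : Prop :=
  ∀ v : V, chromNum (G.induce (insert v (G.neighborSet v))) ≤ s

/-- The set of vertices at distance at most `r` from `v` in `G`. -/
def ballSet {V : Type*} (G : SimpleGraph V) (v : V) (r : ℕ) : Set V :=
  {u : V | ∃ w : G.Walk v u, w.length ≤ r}

/-- `G` is `r`-locally `s`-colourable: every ball of radius `r` induces an
`s`-colourable subgraph. -/
def RLocallyColorable {V : Type*} (G : SimpleGraph V) (r s : ℕ) : Prop :=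
  ∀ v : V, chromNum (G.induce (ballSet G v r)) ≤ s

/-- `G` contains no cycle of length exactly `n` as a (not necessarily induced) subgraph. -/
def CycleLenFree {V : Type*} (G : SimpleGraph V) (n : ℕ) : Prop :=
  ∀ (v : V) (w : G.Walk v v), w.IsCycle → w.length ≠ n

/-- `H` is `k`-degenerate: every non-empty (induced) subgraph contains a vertex of
degree at most `k` in it. -/
def Degenerate {α : Type*} (H : SimpleGraph α) (k : ℕ) : Prop :=
  ∀ S : Set α, S.Nonempty → ∃ a ∈ S, {b | b ∈ S ∧ H.Adj a b}.ncard ≤ k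

/-- `G` is co-locally `s`-colourable: for all vertices `u ≠ v`,
`χ(G[{u} ∪ N(v)]) ≤ s`. -/
def CoLocallyColorable {V : Type*} (G : SimpleGraph V) (s : ℕ) : Prop :=
  ∀ v u : V, u ≠ v → chromNum (G.induce (insert u (G.neighborSet v))) ≤ s

/-- The minimum of `χ(G[X])` over all subsets `X ⊆ V(G)` spanning exactly `p` colours
of `σ` (a rainbow cover of `σ` when `σ` uses exactly `p` colours). -/
noncomputable def minRainbowChrom {V : Type*} (G : SimpleGraph V) (σ : V → ℕ) (p : ℕ) : ℕ :=
  sInf {c : ℕ | ∃ X : Set V, (σ '' X).ncard = p ∧ c = chromNum (G.induce X)}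

/-- `f_G(p)`: the maximum, over all proper colourings `σ` of `G` using exactly `p`
colours, of the minimum chromatic number of a rainbow cover of `σ`. -/
noncomputable def fG {V : Type*} (G : SimpleGraph V) (p : ℕ) : ℕ :=
  sSup {m : ℕ | ∃ σ : V → ℕ, IsProperColoring G σ ∧ (σ '' Set.univ).ncard = p ∧
    m = minRainbowChrom G σ p}

/-- The closed neighbourhood `N[X]` of a set `X` of vertices. -/
def closedNbhd {V : Type*} (G : SimpleGraph V) (X : Set V) : Set V :=
  X ∪ {u : V | ∃ x ∈ X, G.Adj x u}

/-!
Given a proper colouring `σ` with `p = χ(G) + k` colours, it suffices to find an independent set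
`T` with `|T| ≤ k + 1` whose closed neighbourhood sees every colour: in a locally `s`-colourable
graph each `N(v)` is `(s - 1)`-colourable, so `N[T]` is `(|T|(s - 1) + 1)`-colourable.
Such a `T` is built greedily. Take `v₁` whose closed neighbourhood sees the largest set `A` of
colours and recurse on the vertices `H` whose colours miss `A`; the step costs one vertex and
`|A|` colours, and it is paid for by `χ(G[S]) ≤ χ(G[H]) + |A| - 1`: colour `H` with `χ(G[H])`
colours, the remaining vertices with the colours of `A`, and then recolour the class of `σ v₁`
with a colour of `A` missing from each vertex's neighbourhood. By maximality of `A`, the vertices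
of that class without a missing colour have no neighbour in `H`, so they join a colour of `H`.
-/

section Colorable

variable {V : Type*} {G : SimpleGraph V}

lemma colorable_chromNum [Finite V] (G : SimpleGraph V) : G.Colorable (chromNum G) :=
  have := Fintype.ofFinite V
  Nat.sInf_mem (s := {n | G.Colorable n}) ⟨_, G.colorable_of_fintype⟩

lemma chromNum_le_of_colorable {n : ℕ} (h : G.Colorable n) : chromNum G ≤ n :=
  Nat.sInf_le h

lemma one_le_chromNum [Finite V] [Nonempty V] (G : SimpleGraph V) : 1 ≤ chromNum G := by
  obtain ⟨C⟩ := colorable_chromNum G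
  exact (C (Classical.arbitrary V)).pos

lemma chromNum_le_chromNum_induce_univ [Finite V] (G : SimpleGraph V) :
    chromNum G ≤ chromNum (G.induce Set.univ) :=
  chromNum_le_of_colorable
    ((colorable_chromNum _).of_hom (induceUnivIso G).symm.toEmbedding.toHom)

lemma SimpleGraph.Colorable.induce_of_subset {X Y : Set V} (hXY : X ⊆ Y) {n : ℕ}
    (h : (G.induce Y).Colorable n) : (G.induce X).Colorable n :=
  h.of_hom (G.induceHomOfLE hXY).toHom

lemma colorable_induce_union {X Y : Set V} {a b : ℕ} (hX : (G.induce X).Colorable a)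
    (hY : (G.induce Y).Colorable b) : (G.induce (X ∪ Y)).Colorable (a + b) := by
  classical
  obtain ⟨cX⟩ := hX
  obtain ⟨cY⟩ := hY
  let c : ↥(X ∪ Y) → Fin a ⊕ Fin b := fun v =>
    if hv : v.1 ∈ X then .inl (cX ⟨v, hv⟩) else .inr (cY ⟨v, v.2.resolve_left hv⟩)
  refine (Coloring.mk c fun {u v} huv => ?_).colorable.mono (by simp)
  by_cases hu : u.1 ∈ X <;> by_cases hv : v.1 ∈ X <;> simp only [c, hu, hv, dite_true, dite_false,
    ne_eq, Sum.inl.injEq, Sum.inr.injEq, reduceCtorEq, not_false_eq_true]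
  · exact cX.valid huv
  · exact cY.valid huv

lemma colorable_induce_union_of_forall_not_adj {X Y : Set V} {n : ℕ}
    (hXY : ∀ x ∈ X, ∀ y ∈ Y, ¬ G.Adj x y) (hX : (G.induce X).Colorable n)
    (hY : (G.induce Y).Colorable n) : (G.induce (X ∪ Y)).Colorable n := by
  classical
  obtain ⟨cX⟩ := hX
  obtain ⟨cY⟩ := hY
  let c : ↥(X ∪ Y) → Fin n := fun v =>
    if hv : v.1 ∈ X then cX ⟨v, hv⟩ else cY ⟨v, v.2.resolve_left hv⟩
  refine ⟨Coloring.mk c fun {u v} huv => ?_⟩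
  by_cases hu : u.1 ∈ X <;> by_cases hv : v.1 ∈ X <;> simp only [c, hu, hv, dite_true, dite_false]
  · exact cX.valid huv
  · exact absurd huv (hXY u hu v (v.2.resolve_left hv))
  · exact absurd huv.symm (hXY v hv u (u.2.resolve_left hu))
  · exact cY.valid huv

lemma colorable_induce_biUnion {ι : Type*} (T : Finset ι) (X : ι → Set V) {n : ℕ}
    (h : ∀ i ∈ T, (G.induce (X i)).Colorable n) :
    (G.induce (⋃ i ∈ T, X i)).Colorable (T.card * n) := by
  classical
  induction T using Finset.induction_on with
  | empty => simp
  | insert i T hi ih =>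
    rw [Finset.set_biUnion_insert, Finset.card_insert_of_notMem hi, add_mul, one_mul, add_comm]
    exact colorable_induce_union (h i (T.mem_insert_self i))
      (ih fun j hj => h j (Finset.mem_insert_of_mem hj))

lemma IsProperColoring.colorable {σ : V → ℕ} (hσ : IsProperColoring G σ) {B : Set ℕ}
    (hB : B.Finite) (hσB : ∀ x, σ x ∈ B) : G.Colorable B.ncard := by
  have := hB.fintype
  rw [← Nat.card_coe_set_eq, Nat.card_eq_fintype_card]
  exact (Coloring.mk (fun x => (⟨σ x, hσB x⟩ : B))
    fun huv e => hσ huv (congrArg Subtype.val e)).colorable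

lemma IsProperColoring.induce {σ : V → ℕ} (hσ : IsProperColoring G σ) (S : Set V) :
    IsProperColoring (G.induce S) (σ ∘ Subtype.val) :=
  fun _ _ huv => hσ huv

lemma IsProperColoring.chromNum_induce_le [Finite V] {σ : V → ℕ} (hσ : IsProperColoring G σ)
    (S : Set V) : chromNum (G.induce S) ≤ (σ '' S).ncard :=
  chromNum_le_of_colorable <|
    (hσ.induce S).colorable (Set.toFinite _) fun x => Set.mem_image_of_mem σ x.2

/-- The class of `c` is independent, so each of its vertices can move to its own missing colour. -/
lemma IsProperColoring.colorable_ncard_sub_one {σ : V → ℕ} (hσ : IsProperColoring G σ)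
    {A : Set ℕ} (hA : A.Finite) (hσA : ∀ x, σ x ∈ A) {c : ℕ} (hc : c ∈ A)
    (hmiss : ∀ x, σ x = c → ∃ m ∈ A \ {c}, ∀ y, G.Adj x y → σ y ≠ m) :
    G.Colorable (A.ncard - 1) := by
  classical
  choose! m hmA hm using hmiss
  let τ : V → ℕ := fun x => if σ x = c then m x else σ x
  rw [← Set.ncard_sdiff_singleton_of_mem hc]
  refine IsProperColoring.colorable (σ := τ) (fun x y hxy => ?_) hA.sdiff fun x => ?_
  · by_cases hx : σ x = c <;> by_cases hy : σ y = c <;> simp only [τ, hx, hy, if_true, if_false]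
    · exact absurd (hx.trans hy.symm) (hσ hxy)
    · exact (hm x hx y hxy).symm
    · exact hm y hy x hxy.symm
    · exact hσ hxy
  · by_cases hx : σ x = c
    · simpa only [τ, hx, if_true] using hmA x hx
    · simp only [τ, hx, if_false]
      exact ⟨hσA x, hx⟩

end Colorable

section ClosedNbhd

variable {V : Type*} {G : SimpleGraph V}

lemma SimpleGraph.IsIndepSet.insert_of_forall_not_adj {X : Set V} {v : V} (hX : G.IsIndepSet X)
    (hv : ∀ x ∈ X, ¬ G.Adj v x) : G.IsIndepSet (insert v X) :=
  Set.pairwise_insert.mpr ⟨hX, fun x hx _ => ⟨hv x hx, fun h => hv x hx h.symm⟩⟩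

lemma closedNbhd_mono {X Y : Set V} (hXY : X ⊆ Y) : closedNbhd G X ⊆ closedNbhd G Y :=
  Set.union_subset_union hXY fun _ ⟨x, hx, hxu⟩ => ⟨x, hXY hx, hxu⟩

lemma insert_neighborSet_subset_closedNbhd {X : Set V} {v : V} (hv : v ∈ X) :
    insert v (G.neighborSet v) ⊆ closedNbhd G X := by
  rintro u (rfl | hu)
  exacts [Or.inl hv, Or.inr ⟨v, hv, hu⟩]

lemma closedNbhd_subset_union (X : Set V) :
    closedNbhd G X ⊆ X ∪ ⋃ x ∈ X, G.neighborSet x :=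
  Set.union_subset_union_right _ fun _ ⟨_, hx, hxu⟩ => Set.mem_biUnion hx hxu

lemma colorable_induce_closedNbhd {T : Finset V} (hT : G.IsIndepSet T) {n : ℕ}
    (h : ∀ v ∈ T, (G.induce (G.neighborSet v)).Colorable n) :
    (G.induce (closedNbhd G T)).Colorable (T.card * n + 1) := by
  have hTcol : (G.induce T).Colorable 1 :=
    ⟨Coloring.mk (fun _ => 0) fun {x y} hxy _ =>
      hT x.2 y.2 (Subtype.coe_injective.ne ((G.induce T).ne_of_adj hxy)) hxy⟩
  rw [add_comm]
  exact (colorable_induce_union hTcol (colorable_induce_biUnion T _ h)).induce_of_subset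
    (closedNbhd_subset_union _)

lemma LocallyColorable.colorable_induce_neighborSet [Finite V] {s : ℕ}
    (hloc : LocallyColorable G s) (v : V) : (G.induce (G.neighborSet v)).Colorable (s - 1) := by
  obtain ⟨C⟩ := (colorable_chromNum _).mono (hloc v)
  let incl : G.neighborSet v → ↥(insert v (G.neighborSet v)) :=
    fun u => ⟨u, Set.mem_insert_of_mem _ u.2⟩
  let C' : (G.induce (G.neighborSet v)).Coloring {c : Fin s // c ≠ C ⟨v, Set.mem_insert _ _⟩} :=
    Coloring.mk (fun u => ⟨C (incl u), C.valid (G.adj_symm u.2)⟩)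
      fun {u w} huv e =>
        C.valid (show (G.induce _).Adj (incl u) (incl w) from huv) (congrArg Subtype.val e)
  simpa [Fintype.card_subtype_compl] using C'.colorable

def closedNbhdIn (G : SimpleGraph V) (S : Set V) (v : V) : Set V :=
  insert v (G.neighborSet v) ∩ S

end ClosedNbhd

section Cover

variable {V : Type*} [Finite V] {G : SimpleGraph V} {σ : V → ℕ}

lemma chromNum_induce_add_one_le (hσ : IsProperColoring G σ) {S : Set V} {v₁ : V} (hv₁ : v₁ ∈ S)
    (hmax : ∀ v ∈ S, (σ '' closedNbhdIn G S v).ncard ≤ (σ '' closedNbhdIn G S v₁).ncard)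
    (hH : {x ∈ S | σ x ∉ σ '' closedNbhdIn G S v₁}.Nonempty) :
    chromNum (G.induce S) + 1 ≤
      chromNum (G.induce {x ∈ S | σ x ∉ σ '' closedNbhdIn G S v₁}) +
        (σ '' closedNbhdIn G S v₁).ncard := by
  set A := σ '' closedNbhdIn G S v₁
  set H := {x ∈ S | σ x ∉ A}
  set W := {x ∈ S | σ x = σ v₁ ∧ A ⊆ σ '' closedNbhdIn G S x}
  set R := {x ∈ S | σ x ∈ A ∧ x ∉ W}
  have hA : σ v₁ ∈ A := ⟨v₁, ⟨Set.mem_insert _ _, hv₁⟩, rfl⟩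
  -- By maximality of `A`, a vertex of `W` sees exactly the colours `A`.
  have hHW : ∀ x ∈ H, ∀ y ∈ W, ¬ G.Adj x y := by
    rintro x ⟨hxS, hxA⟩ y ⟨hyS, -, hAy⟩ hxy
    rw [Set.eq_of_subset_of_ncard_le hAy (hmax y hyS) (Set.toFinite _)] at hxA
    exact hxA ⟨x, ⟨Set.mem_insert_of_mem _ hxy.symm, hxS⟩, rfl⟩
  have hHWcol : (G.induce (H ∪ W)).Colorable (chromNum (G.induce H)) := by
    have : Nonempty H := hH.to_subtype
    refine colorable_induce_union_of_forall_not_adj hHW (colorable_chromNum _) ?_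
    exact ((hσ.induce W).colorable (Set.finite_singleton (σ v₁)) fun y => y.2.2.1).mono
      (by simpa using one_le_chromNum (G.induce H))
  have hRcol : (G.induce R).Colorable (A.ncard - 1) := by
    refine (hσ.induce R).colorable_ncard_sub_one (Set.toFinite A) (fun x => x.2.2.1) hA ?_
    rintro ⟨x, hxS, -, hxW⟩ (hx : σ x = σ v₁)
    obtain ⟨m, hmA, hm⟩ := Set.not_subset.mp fun h => hxW ⟨hxS, hx, h⟩
    refine ⟨m, ⟨hmA, fun e => hm ⟨x, ⟨Set.mem_insert _ _, hxS⟩, hx.trans e.symm⟩⟩, ?_⟩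
    rintro ⟨y, hyS, _⟩ hxy hym
    exact hm ⟨y, ⟨Set.mem_insert_of_mem _ hxy, hyS⟩, hym⟩
  have hS : S ⊆ (H ∪ W) ∪ R := fun x hxS => by
    by_cases hxA : σ x ∈ A
    · by_cases hxW : x ∈ W
      exacts [Or.inl (Or.inr hxW), Or.inr ⟨hxS, hxA, hxW⟩]
    · exact Or.inl (Or.inl ⟨hxS, hxA⟩)
  have hχ := chromNum_le_of_colorable ((colorable_induce_union hHWcol hRcol).induce_of_subset hS)
  have hApos : 0 < A.ncard := (Set.ncard_pos (Set.toFinite _)).mpr ⟨_, hA⟩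
  omega

lemma exists_isIndepSet_image_subset_image_closedNbhd (hσ : IsProperColoring G σ) (S : Set V) :
    ∃ T : Finset V, ↑T ⊆ S ∧ G.IsIndepSet T ∧ σ '' S ⊆ σ '' closedNbhd G T ∧
      T.card + chromNum (G.induce S) ≤ (σ '' S).ncard + 1 := by
  classical
  induction hn : (σ '' S).ncard using Nat.strong_induction_on generalizing S with
  | _ n ih =>
  have hχ := hσ.chromNum_induce_le S
  rcases S.eq_empty_or_nonempty with rfl | hSne
  · exact ⟨∅, by simp, by simp, by simp, by rw [Finset.card_empty]; omega⟩
  obtain ⟨v₁, hv₁, hmax⟩ :=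
    Set.exists_max_image S (fun v => (σ '' closedNbhdIn G S v).ncard) (Set.toFinite S) hSne
  set A := σ '' closedNbhdIn G S v₁
  set H := {x ∈ S | σ x ∉ A}
  have hAS : A ⊆ σ '' S := Set.image_mono Set.inter_subset_right
  have hA : σ v₁ ∈ A := ⟨v₁, ⟨Set.mem_insert _ _, hv₁⟩, rfl⟩
  have hAcov : A ⊆ σ '' closedNbhd G ({v₁} : Finset V) :=
    Set.image_mono (Set.inter_subset_left.trans (insert_neighborSet_subset_closedNbhd (by simp)))
  rcases H.eq_empty_or_nonempty with hH | hH
  · refine ⟨{v₁}, by simpa, by simp, fun c ⟨x, hxS, hxc⟩ => ?_,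
      by rw [Finset.card_singleton]; omega⟩
    refine hAcov (by_contra fun hcA => ?_)
    exact hH.subset ⟨hxS, hxc ▸ hcA⟩
  have himH : σ '' H = σ '' S \ A := Set.image_inter_preimage σ S Aᶜ
  have hHn : (σ '' H).ncard + A.ncard = n := by
    rw [himH, Set.ncard_sdiff hAS, ← hn]
    have := Set.ncard_le_ncard hAS
    omega
  have hApos : 0 < A.ncard := (Set.ncard_pos (Set.toFinite _)).mpr ⟨_, hA⟩
  obtain ⟨T, hTH, hT, hTcov, hTcard⟩ := ih _ (by omega) H rfl
  have hv₁T : v₁ ∉ T := fun h => (hTH h).2 hA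
  have hkey : chromNum (G.induce S) + 1 ≤ chromNum (G.induce H) + A.ncard :=
    chromNum_induce_add_one_le hσ hv₁ hmax hH
  refine ⟨insert v₁ T, ?_, ?_, ?_, by rw [Finset.card_insert_of_notMem hv₁T]; omega⟩
  · rw [Finset.coe_insert]
    exact Set.insert_subset hv₁ (hTH.trans (Set.sep_subset _ _))
  · rw [Finset.coe_insert]
    exact hT.insert_of_forall_not_adj fun x hx hadj =>
      (hTH hx).2 ⟨x, ⟨Set.mem_insert_of_mem _ hadj, (hTH hx).1⟩, rfl⟩
  · have hsub {X : Finset V} (h : X ⊆ insert v₁ T) := Set.image_mono (f := σ)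
      (closedNbhd_mono (G := G) (Finset.coe_subset.mpr h))
    rw [← Set.union_sdiff_cancel hAS, ← himH]
    exact Set.union_subset (hAcov.trans (hsub (by simp))) (hTcov.trans (hsub (by simp)))

end Cover

theorem fG_locallyColourable_general {V : Type*} [Fintype V]
    (s k : ℕ) (G : SimpleGraph V) (hloc : LocallyColorable G s) :
    fG G (chromNum G + k) ≤ (s - 1) * (k + 1) + 1 := by
  refine csSup_le' ?_
  rintro _ ⟨σ, hσ, hp, rfl⟩
  obtain ⟨T, -, hT, hcov, hcard⟩ := exists_isIndepSet_image_subset_image_closedNbhd hσ Set.univ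
  have hX : (σ '' closedNbhd G T).ncard = chromNum G + k := by
    rw [← hp, (Set.image_mono (Set.subset_univ _)).antisymm hcov]
  have hTk : T.card ≤ k + 1 := by
    have := chromNum_le_chromNum_induce_univ G
    omega
  calc minRainbowChrom G σ (chromNum G + k)
      ≤ chromNum (G.induce (closedNbhd G T)) := Nat.sInf_le ⟨_, hX, rfl⟩
    _ ≤ T.card * (s - 1) + 1 := chromNum_le_of_colorable <|
      colorable_induce_closedNbhd hT fun v _ => hloc.colorable_induce_neighborSet v
    _ ≤ (s - 1) * (k + 1) + 1 := by rw [mul_comm]; gcongr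

/-- For integers `s ≥ 2` and `k ≥ 0`, every finite locally `s`-colourable
graph `G` with at least one vertex (and `χ(G)+k ≤ |V(G)|`) satisfies
`f_G(χ(G)+k) ≤ (s-1)(k+1)+1`. -/
theorem fG_locallyColourable {V : Type*} [Fintype V] [Nonempty V]
    (s k : ℕ) (hs : 2 ≤ s) (G : SimpleGraph V) (hloc : LocallyColorable G s)
    (hpk : chromNum G + k ≤ Fintype.card V) :
    fG G (chromNum G + k) ≤ (s - 1) * (k + 1) + 1 :=
  fG_locallyColourable_general s k G hloc
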